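/- arXiv:1507.00691 — 2 statements merged into one kernel-verified Lean document; each statement's English description precedes it below -/
import Mathlib

section
/- (Energy drops by at least 1 when far from a 2-cycle.) Let x ∈ {0,1}^V be an adoption vector whose trajectory does not enter a 2-cycle within 2|V| time steps, i.e. there is no t ≤ 2|V| with F^{t+2}(x) = F^t(x). Then F²(x) differs from x in at least 2 coordinates, and consequently E(F(x)) + 1 ≤ E(x). -/
open Finset

/-!
The update map `F` is monotone for the pointwise order on `{0,1}^V`. If `F²(x)` and `x` differed
in at most one coordinate they would be comparable, so the even-time orbit `(F²)^t x` would be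
monotone; as the number of ones strictly changes at every move, it becomes stationary within `|V|`
steps, producing a 2-cycle at some time `t ≤ 2|V|`.

For the energy, symmetry of `A` gives `E(x) - E(F x) = ⟨A F(x) - β, F²(x) - x⟩`. The vector
`A F(x) - β` is half-integral and its `i`-th entry is positive exactly when `F²(x)_i = 1`, so every
coordinate where `F²(x)` and `x` differ contributes at least `1/2`.
-/

/-- The threshold update map: node `i` adopts Behavior 1 iff the number of its
neighbors currently adopting Behavior 1 is at least its threshold `b i`. -/
def thrUpd {V : Type*} [Fintype V] [DecidableEq V] (G : SimpleGraph V) [DecidableRel G.Adj]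
    (b : V → ℤ) (x : V → Bool) : V → Bool :=
  fun i => decide (b i ≤ ∑ j ∈ G.neighborFinset i, (if x j then (1 : ℤ) else 0))

/-- An adoption vector regarded as a rational vector. -/
def toQ {V : Type*} (x : V → Bool) : V → ℚ := fun i => if x i then 1 else 0

/-- The half-integer thresholds `β i = b i - 1/2`. -/
def halfThr {V : Type*} (b : V → ℤ) : V → ℚ := fun i => (b i : ℚ) - 1/2

/-- The adjacency matrix of `G` applied to (the rational version of) an adoption
vector: `(A·x) i = ∑_{j ∈ δ(i)} x j`. -/
def Avec {V : Type*} [Fintype V] [DecidableEq V] (G : SimpleGraph V) [DecidableRel G.Adj]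
    (x : V → Bool) : V → ℚ :=
  fun i => ∑ j ∈ G.neighborFinset i, toQ x j

/-- The energy `E(x) = ⟨β, x⟩ − ⟨A·x − β, F(x)⟩`. -/
def energy {V : Type*} [Fintype V] [DecidableEq V] (G : SimpleGraph V) [DecidableRel G.Adj]
    (b : V → ℤ) (x : V → Bool) : ℚ :=
  (∑ i, halfThr b i * toQ x i) - ∑ i, (Avec G x i - halfThr b i) * toQ (thrUpd G b x) i


theorem Monotone.exists_succ_eq_of_bounded_height {α : Type*} [PartialOrder α] {u : ℕ → α}
    (hu : Monotone u) {h : α → ℕ} (hh : StrictMono h) {N : ℕ} (hN : ∀ a, h a ≤ N) :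
    ∃ t ≤ N, u (t + 1) = u t := by
  by_contra! hne
  have climb : ∀ t ≤ N + 1, t ≤ h (u t) := by
    intro t
    induction t with
    | zero => simp
    | succ t ih =>
      intro ht
      have := hh ((hu (Nat.le_add_right t 1)).lt_of_ne (hne t (by omega)).symm)
      have := ih (by omega)
      omega
  have := climb (N + 1) le_rfl
  have := hN (u (N + 1))
  omega

theorem Antitone.exists_succ_eq_of_bounded_height {α : Type*} [PartialOrder α] {u : ℕ → α}
    (hu : Antitone u) {h : α → ℕ} (hh : StrictMono h) {N : ℕ} (hN : ∀ a, h a ≤ N) :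
    ∃ t ≤ N, u (t + 1) = u t :=
  hu.dual_right.exists_succ_eq_of_bounded_height (h := fun a => N - h (OrderDual.ofDual a))
    (fun _ _ hab => Nat.sub_lt_sub_left ((hh hab).trans_le (hN _)) (hh hab))
    (fun _ => Nat.sub_le _ _)

theorem Bool.toNat_strictMono : StrictMono Bool.toNat := by decide

section BoolVectors

variable {V : Type*} [Fintype V]

theorem strictMono_sum_toNat : StrictMono fun y : V → Bool => ∑ i, (y i).toNat :=
  Fintype.sum_strictMono.comp fun _ _ hyz =>
    let ⟨hle, i, hi⟩ := Pi.lt_def.mp hyz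
    Pi.lt_def.mpr ⟨fun j => Bool.toNat_le_toNat (hle j), i, Bool.toNat_strictMono hi⟩

theorem sum_toNat_le_card (y : V → Bool) : ∑ i, (y i).toNat ≤ Fintype.card V := by
  simpa using Finset.sum_le_card_nsmul univ (fun i => (y i).toNat) 1 fun i _ => Bool.toNat_le _

theorem Monotone.exists_le_card_iterate_succ_eq {g : (V → Bool) → V → Bool} (hg : Monotone g)
    {x : V → Bool} (hx : x ≤ g x ∨ g x ≤ x) :
    ∃ t ≤ Fintype.card V, g^[t + 1] x = g^[t] x := by
  rcases hx with hx | hx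
  · exact (hg.monotone_iterate_of_le_map hx).exists_succ_eq_of_bounded_height
      strictMono_sum_toNat sum_toNat_le_card
  · exact (hg.antitone_iterate_of_map_le hx).exists_succ_eq_of_bounded_height
      strictMono_sum_toNat sum_toNat_le_card

theorem le_or_le_of_card_ne_lt_two {β : Type*} [LinearOrder β] {y z : V → β}
    (h : #{i | y i ≠ z i} < 2) : y ≤ z ∨ z ≤ y := by
  by_contra! hc
  obtain ⟨⟨i, hi⟩, ⟨j, hj⟩⟩ : (∃ i, ¬ y i ≤ z i) ∧ ∃ j, ¬ z j ≤ y j := by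
    simpa [Pi.le_def] using hc
  have hij : i ≠ j := by
    rintro rfl
    exact hi (not_le.mp hj).le
  refine h.not_ge (one_lt_card.mpr ⟨i, ?_, j, ?_, hij⟩) <;>
    simp only [mem_filter, mem_univ, true_and]
  · exact fun he => hi he.le
  · exact fun he => hj he.ge

theorem Monotone.two_le_card_iterate_two_ne {g : (V → Bool) → V → Bool} (hg : Monotone g)
    {x : V → Bool} (h : ¬ ∃ t ≤ 2 * Fintype.card V, g^[t + 2] x = g^[t] x) :
    2 ≤ #{i | g^[2] x i ≠ x i} := by
  by_contra! hlt
  have hcomp : x ≤ g^[2] x ∨ g^[2] x ≤ x :=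
    le_or_le_of_card_ne_lt_two (by simpa only [ne_comm] using hlt)
  obtain ⟨t, ht, heq⟩ := (hg.iterate 2).exists_le_card_iterate_succ_eq hcomp
  refine h ⟨2 * t, by omega, ?_⟩
  rwa [← Function.iterate_mul, ← Function.iterate_mul, mul_add_one] at heq

end BoolVectors

section ThresholdDynamics

open Matrix

variable {V : Type*} [Fintype V] [DecidableEq V] (G : SimpleGraph V) [DecidableRel G.Adj]
  (b : V → ℤ)

theorem monotone_thrUpd : Monotone (thrUpd G b) := by
  intro x y hxy i
  have hcount : ∑ j ∈ G.neighborFinset i, (if x j then (1 : ℤ) else 0) ≤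
      ∑ j ∈ G.neighborFinset i, (if y j then (1 : ℤ) else 0) :=
    sum_le_sum fun j _ => by have := hxy j; revert this; cases x j <;> cases y j <;> simp
  simp only [thrUpd, Bool.le_iff_imp, decide_eq_true_eq]
  exact fun h => h.trans hcount

theorem avec_eq_mulVec (x : V → Bool) : Avec G x = G.adjMatrix ℚ *ᵥ toQ x :=
  funext fun i => (G.adjMatrix_mulVec_apply i _).symm

theorem avec_dotProduct_comm (x y : V → Bool) : Avec G x ⬝ᵥ toQ y = Avec G y ⬝ᵥ toQ x := by
  rw [avec_eq_mulVec, avec_eq_mulVec, dotProduct_comm, dotProduct_mulVec, ← mulVec_transpose,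
    G.transpose_adjMatrix]

theorem energy_sub_energy_thrUpd (x : V → Bool) :
    energy G b x - energy G b (thrUpd G b x) =
      ∑ i, (Avec G (thrUpd G b x) i - halfThr b i) *
        (toQ (thrUpd G b (thrUpd G b x)) i - toQ x i) := by
  have hsymm := avec_dotProduct_comm G x (thrUpd G b x)
  simp only [dotProduct] at hsymm
  simp only [energy, sub_mul, mul_sub, sum_sub_distrib]
  linarith

theorem avec_eq_cast_count (y : V → Bool) (i : V) :
    Avec G y i = ((∑ j ∈ G.neighborFinset i, if y j then (1 : ℤ) else 0 : ℤ) : ℚ) := by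
  push_cast [Avec, toQ]
  rfl

theorem ite_ne_half_le_avec_sub_halfThr_mul (y z : V → Bool) (i : V) :
    (if thrUpd G b y i ≠ z i then (1 : ℚ) / 2 else 0) ≤
      (Avec G y i - halfThr b i) * (toQ (thrUpd G b y) i - toQ z i) := by
  simp only [toQ]
  rw [avec_eq_cast_count]
  set n := ∑ j ∈ G.neighborFinset i, if y j then (1 : ℤ) else 0
  have hF : thrUpd G b y i = decide (b i ≤ n) := rfl
  rw [hF]
  rcases le_or_gt (b i) n with hbn | hnb
  · have : (b i : ℚ) ≤ n := by exact_mod_cast hbn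
    cases z i <;> simp [halfThr, hbn]
    linarith
  · have : (n : ℚ) + 1 ≤ b i := by exact_mod_cast hnb
    cases z i <;> simp [halfThr, hnb.not_ge]
    linarith

theorem card_ne_div_two_le_energy_sub (x : V → Bool) :
    (#{i | thrUpd G b (thrUpd G b x) i ≠ x i} : ℚ) / 2 ≤
      energy G b x - energy G b (thrUpd G b x) := by
  rw [energy_sub_energy_thrUpd]
  calc (#{i | thrUpd G b (thrUpd G b x) i ≠ x i} : ℚ) / 2
      = ∑ i, if thrUpd G b (thrUpd G b x) i ≠ x i then (1 : ℚ) / 2 else 0 := by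
        rw [← sum_filter, sum_const, nsmul_eq_mul, div_eq_mul_one_div]
    _ ≤ _ := sum_le_sum fun i _ => ite_ne_half_le_avec_sub_halfThr_mul G b _ x i

end ThresholdDynamics

/-- Energy drops by at least 1 when far from a 2-cycle: if the trajectory from `x`
does not enter a 2-cycle within `2|V|` time steps, then `F²(x)` differs from `x` in
at least 2 coordinates, and `E(F(x)) + 1 ≤ E(x)`. -/
theorem energy_drops_by_one_when_far_from_two_cycle {V : Type*} [Fintype V]
    [DecidableEq V] (G : SimpleGraph V) [DecidableRel G.Adj] (b : V → ℤ) (x : V → Bool)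
    (h : ¬ ∃ t ≤ 2 * Fintype.card V, (thrUpd G b)^[t + 2] x = (thrUpd G b)^[t] x) :
    2 ≤ (Finset.univ.filter fun i => (thrUpd G b)^[2] x i ≠ x i).card ∧
      energy G b (thrUpd G b x) + 1 ≤ energy G b x := by
  have hcard := (monotone_thrUpd G b).two_le_card_iterate_two_ne h
  refine ⟨hcard, ?_⟩
  have hdrop := card_ne_div_two_le_energy_sub G b x
  have hcardQ : (2 : ℚ) ≤ #{i | thrUpd G b (thrUpd G b x) i ≠ x i} := by exact_mod_cast hcard
  linarith
end

section
/- (Main convergence bound for reversible threshold spread.) For every initial adoption vector x(0) ∈ {0,1}^V, within 2|E| + |V| time steps the trajectory x(t) := F^t(x(0)) converges to a cycle of length at most 2: there exists t ≤ 2|E| + |V| with x(t+2) = x(t), and hence x(s+2) = x(s) for all s ≥ t. -/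
open Finset

/-!
Clamp each threshold to `θᵢ ∈ [0, deg i + 1]`, which does not change `F`, and consider the
energy `E(x, y) = ∑ᵢ (2θᵢ - 1)(xᵢ + yᵢ) - 2 yᵀ A x` of consecutive states `(x(t), x(t+1))`.
Since the adjacency matrix `A` is symmetric, `E` drops at step `t` by at least the number of
vertices with `x(t+2)ᵢ ≠ x(t)ᵢ`. So each step before a 2-cycle is reached lowers `E` by 2, except
steps at which a single vertex changes. After such a step `x(t)` and `x(t+2)` are comparable and
the monotone map `F` freezes that vertex on the parity class of `t`, so each vertex accounts for
at most two such steps, and at most one if its clamped threshold is `0` or `deg i + 1`.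
Comparing with the range of the per-vertex terms of `E` gives `2T ≤ ∑ᵢ (2 deg i + 2)`.
-/

open Matrix

namespace ThresholdNetwork

variable {V : Type*}

lemma iterate_succ_apply_eq_of_forall_ne {f : (V → Bool) → V → Bool} (hf : Monotone f)
    {y : V → Bool} {i : V} (h : ∀ j ≠ i, f y j = y j) (r : ℕ) : f^[r + 1] y i = f y i := by
  cases hfi : f y i
  · have hle : f y ≤ y := fun j => by
      by_cases hj : j = i
      · simp [hj, hfi]
      · exact (h j hj).le
    exact le_antisymm
      (by simpa [hfi] using hf.antitone_iterate_of_map_le hle (Nat.le_add_left 1 r) i)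
      (Bool.false_le _)
  · have hle : y ≤ f y := fun j => by
      by_cases hj : j = i
      · simp [hj, hfi]
      · exact (h j hj).ge
    exact le_antisymm (Bool.le_true _)
      (by simpa [hfi] using hf.monotone_iterate_of_le_map hle (Nat.le_add_left 1 r) i)

lemma iterate_add_two_eq_of_le {α : Type*} {f : α → α} {x : α} {t s : ℕ}
    (h : f^[t + 2] x = f^[t] x) (hs : t ≤ s) : f^[s + 2] x = f^[s] x := by
  obtain ⟨k, rfl⟩ := Nat.exists_eq_add_of_le hs
  have hper : Function.IsPeriodicPt f 2 (f^[t] x) := by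
    rw [Function.IsPeriodicPt, Function.IsFixedPt, ← Function.iterate_add_apply, add_comm]
    exact h
  have := hper.apply_iterate k
  rwa [Function.IsPeriodicPt, Function.IsFixedPt, ← Function.iterate_add_apply,
    ← Function.iterate_add_apply, ← Function.iterate_add_apply,
    show 2 + k + t = t + k + 2 by omega, add_comm k] at this

lemma iterate_add_two_mul {α : Type*} (f : α → α) (x : α) (t k : ℕ) :
    f^[t + 2 * k] x = (f^[2])^[k] (f^[t] x) := by
  rw [← Function.iterate_mul, add_comm, Function.iterate_add_apply]

variable [Fintype V]

section MonotoneDynamics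

variable (f : (V → Bool) → V → Bool) (x : V → Bool)

def twoStepChanges (t : ℕ) : Finset V := {i | f^[t + 2] x i ≠ f^[t] x i}

variable {f x}

lemma twoStepChanges_nonempty {t : ℕ} (h : f^[t + 2] x ≠ f^[t] x) :
    (twoStepChanges f x t).Nonempty := by
  obtain ⟨i, hi⟩ := Function.ne_iff.mp h
  exact ⟨i, mem_filter.mpr ⟨mem_univ i, hi⟩⟩

/-- If only `i` changes between times `t` and `t + 2`, these two configurations are comparable,
so monotonicity of `f^[2]` keeps `i` at its new value at all later times of the same parity. -/
lemma notMem_twoStepChanges_of_eq_singleton (hf : Monotone f) {t t' : ℕ} {i : V}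
    (hsolo : twoStepChanges f x t = {i}) (hlt : t < t') (hpar : t % 2 = t' % 2) :
    i ∉ twoStepChanges f x t' := by
  obtain ⟨r, rfl⟩ : ∃ r, t' = t + 2 * (r + 1) := ⟨(t' - t) / 2 - 1, by omega⟩
  have hsame : ∀ j ≠ i, f^[2] (f^[t] x) j = f^[t] x j := fun j hj => by
    have hj' : j ∉ twoStepChanges f x t := by simp [hsolo, hj]
    simpa [twoStepChanges, iterate_add_two_mul f x t 1] using hj'
  have key := iterate_succ_apply_eq_of_forall_ne (hf.iterate 2) hsame
  simp only [twoStepChanges, mem_filter, mem_univ, true_and, not_not]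
  rw [show t + 2 * (r + 1) + 2 = t + 2 * (r + 1 + 1) by ring, iterate_add_two_mul,
    iterate_add_two_mul, key, key]

variable [DecidableEq V]

def soloChangeTimes (f : (V → Bool) → V → Bool) (x : V → Bool) (T : ℕ) (i : V) : Finset ℕ :=
  {t ∈ range T | twoStepChanges f x t = {i}}

lemma card_soloChangeTimes_le_two (hf : Monotone f) (T : ℕ) (i : V) :
    #(soloChangeTimes f x T i) ≤ 2 := by
  have hinj : Set.InjOn (· % 2) (soloChangeTimes f x T i) := by
    intro t ht t' ht' hpar
    simp only [soloChangeTimes, mem_coe, mem_filter] at ht ht'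
    by_contra hne
    rcases lt_or_gt_of_ne hne with hlt | hlt
    · exact notMem_twoStepChanges_of_eq_singleton hf ht.2 hlt hpar (by simp [ht'.2])
    · exact notMem_twoStepChanges_of_eq_singleton hf ht'.2 hlt hpar.symm (by simp [ht.2])
  simpa using card_le_card_of_injOn _ (fun t _ => mem_range.mpr (Nat.mod_lt t two_pos)) hinj

lemma card_soloChangeTimes_le_one {i : V} (hi : ∀ y z, f y i = f z i) (T : ℕ) :
    #(soloChangeTimes f x T i) ≤ 1 := by
  refine card_le_one.mpr fun t ht t' ht' => ?_
  suffices ∀ s ∈ soloChangeTimes f x T i, s = 0 by rw [this t ht, this t' ht']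
  rintro (_ | s) hs
  · rfl
  · have hmem : i ∈ twoStepChanges f x (s + 1) := by simp [(mem_filter.mp hs).2]
    simp only [twoStepChanges, mem_filter, mem_univ, true_and,
      Function.iterate_succ_apply'] at hmem
    exact absurd (hi _ _) hmem

end MonotoneDynamics

section Threshold

variable (G : SimpleGraph V) [DecidableRel G.Adj] (b : V → ℤ)

def activeCount (x : V → Bool) : V → ℤ := G.adjMatrix ℤ *ᵥ fun j => (x j).toInt

def clampedThreshold (i : V) : ℤ := max 0 (min (b i) (G.degree i + 1))

def localEnergy (x y : V → Bool) (i : V) : ℤ :=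
  (2 * clampedThreshold G b i - 1) * ((x i).toInt + (y i).toInt)
    - 2 * (y i).toInt * activeCount G x i

def energy (x y : V → Bool) : ℤ := ∑ i, localEnergy G b x y i

variable {G b}

lemma activeCount_apply (x : V → Bool) (i : V) :
    activeCount G x i = ∑ j ∈ G.neighborFinset i, (x j).toInt :=
  G.adjMatrix_mulVec_apply i _

lemma activeCount_nonneg (x : V → Bool) (i : V) : 0 ≤ activeCount G x i := by
  rw [activeCount_apply]
  exact sum_nonneg fun j _ => by cases x j <;> simp

lemma activeCount_le_degree (x : V → Bool) (i : V) : activeCount G x i ≤ G.degree i := by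
  calc activeCount G x i ≤ ∑ _j ∈ G.neighborFinset i, (1 : ℤ) := by
        rw [activeCount_apply]
        exact sum_le_sum fun j _ => by cases x j <;> simp
    _ = G.degree i := by simp

lemma activeCount_mono {x y : V → Bool} (h : x ≤ y) (i : V) :
    activeCount G x i ≤ activeCount G y i := by
  rw [activeCount_apply, activeCount_apply]
  refine sum_le_sum fun j _ => ?_
  have hj := h j
  cases hx : x j <;> cases hy : y j <;> simp_all [Bool.le_iff_imp]

lemma clampedThreshold_nonneg (i : V) : 0 ≤ clampedThreshold G b i := le_max_left _ _

lemma clampedThreshold_le (i : V) : clampedThreshold G b i ≤ G.degree i + 1 :=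
  max_le (by positivity) (min_le_right _ _)

lemma sum_toInt_mul_activeCount_comm (x y : V → Bool) :
    ∑ i, (y i).toInt * activeCount G x i = ∑ i, (x i).toInt * activeCount G y i := by
  change (fun i => (y i).toInt) ⬝ᵥ activeCount G x = (fun i => (x i).toInt) ⬝ᵥ activeCount G y
  rw [activeCount, activeCount, dotProduct_mulVec, ← mulVec_transpose, G.transpose_adjMatrix,
    dotProduct_comm]

lemma energy_sub_energy (x y z : V → Bool) :
    energy G b x y - energy G b y z = ∑ i, ((z i).toInt - (x i).toInt) *
      (2 * activeCount G y i - 2 * clampedThreshold G b i + 1) := by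
  have hsplit : ∀ i, localEnergy G b x y i - localEnergy G b y z i =
      ((z i).toInt - (x i).toInt) * (2 * activeCount G y i - 2 * clampedThreshold G b i + 1)
        + 2 * ((x i).toInt * activeCount G y i - (y i).toInt * activeCount G x i) := by
    intro i
    simp only [localEnergy]
    ring
  rw [energy, energy, ← sum_sub_distrib, sum_congr rfl fun i _ => hsplit i, sum_add_distrib,
    ← mul_sum, sum_sub_distrib, sum_toInt_mul_activeCount_comm x y, sub_self, mul_zero, add_zero]

variable [DecidableEq V]

lemma thrUpd_apply_eq_true_iff (x : V → Bool) (i : V) :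
    thrUpd G b x i = true ↔ clampedThreshold G b i ≤ activeCount G x i := by
  have h₀ := activeCount_nonneg (G := G) x i
  have h₁ := activeCount_le_degree (G := G) x i
  have : thrUpd G b x i = true ↔ b i ≤ activeCount G x i := by
    simp only [thrUpd, decide_eq_true_eq, activeCount_apply]
    exact Iff.of_eq (congrArg _ (sum_congr rfl fun j _ => by cases x j <;> rfl))
  rw [this, clampedThreshold]
  omega

lemma thrUpd_apply_eq_false_iff (x : V → Bool) (i : V) :
    thrUpd G b x i = false ↔ activeCount G x i < clampedThreshold G b i := by
  rw [← not_le, ← thrUpd_apply_eq_true_iff, Bool.not_eq_true]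

lemma thrUpd_apply_cases (x : V → Bool) (i : V) :
    thrUpd G b x i = true ∧ clampedThreshold G b i ≤ activeCount G x i ∨
      thrUpd G b x i = false ∧ activeCount G x i < clampedThreshold G b i := by
  cases hy : thrUpd G b x i
  · exact .inr ⟨rfl, (thrUpd_apply_eq_false_iff x i).mp hy⟩
  · exact .inl ⟨rfl, (thrUpd_apply_eq_true_iff x i).mp hy⟩

lemma thrUpd_monotone : Monotone (thrUpd G b) := fun x y h i => by
  cases hx : thrUpd G b x i
  · exact Bool.false_le _
  · rw [thrUpd_apply_eq_true_iff] at hx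
    rw [(thrUpd_apply_eq_true_iff y i).mpr (hx.trans (activeCount_mono h i))]

lemma thrUpd_apply_eq_of_extreme {i : V}
    (hi : clampedThreshold G b i = 0 ∨ clampedThreshold G b i = G.degree i + 1) (x y : V → Bool) :
    thrUpd G b x i = thrUpd G b y i := by
  have hx₀ := activeCount_nonneg (G := G) x i
  have hx₁ := activeCount_le_degree (G := G) x i
  have hy₀ := activeCount_nonneg (G := G) y i
  have hy₁ := activeCount_le_degree (G := G) y i
  rw [Bool.eq_iff_iff, thrUpd_apply_eq_true_iff, thrUpd_apply_eq_true_iff]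
  omega

lemma ite_ne_le_energy_sub_summand (x y : V → Bool) (i : V) :
    (if thrUpd G b y i ≠ x i then 1 else 0 : ℤ) ≤ ((thrUpd G b y i).toInt - (x i).toInt) *
      (2 * activeCount G y i - 2 * clampedThreshold G b i + 1) := by
  rcases thrUpd_apply_cases (G := G) (b := b) y i with ⟨hy, hs⟩ | ⟨hy, hs⟩ <;> cases x i <;>
    simp only [hy, ne_eq, Bool.toInt_true, Bool.toInt_false, reduceCtorEq, not_true_eq_false,
      not_false_eq_true, if_true, if_false] <;> linarith

lemma card_ne_le_energy_sub (x y : V → Bool) :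
    (#{i | thrUpd G b y i ≠ x i} : ℤ) ≤ energy G b x y - energy G b y (thrUpd G b y) := by
  rw [energy_sub_energy, card_filter, Nat.cast_sum]
  push_cast
  exact sum_le_sum fun i _ => ite_ne_le_energy_sub_summand x y i

lemma localEnergy_thrUpd_le (x : V → Bool) (i : V) :
    localEnergy G b x (thrUpd G b x) i ≤ 2 * clampedThreshold G b i - 1 := by
  have h₀ := activeCount_nonneg (G := G) x i
  rcases thrUpd_apply_cases (G := G) (b := b) x i with ⟨hy, hs⟩ | ⟨hy, hs⟩ <;> cases hx : x i <;>
    simp only [localEnergy, hx, hy, Bool.toInt_true, Bool.toInt_false] <;> linarith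

lemma localEnergy_thrUpd_ge (x : V → Bool) (i : V) :
    2 * clampedThreshold G b i - 2 * G.degree i - 2 ≤ localEnergy G b x (thrUpd G b x) i := by
  have h₀ := activeCount_nonneg (G := G) x i
  have h₁ := activeCount_le_degree (G := G) x i
  have hθ₀ := clampedThreshold_nonneg (G := G) (b := b) i
  have hθ₁ := clampedThreshold_le (G := G) (b := b) i
  rcases thrUpd_apply_cases (G := G) (b := b) x i with ⟨hy, hs⟩ | ⟨hy, hs⟩ <;> cases hx : x i <;>
    simp only [localEnergy, hx, hy, Bool.toInt_true, Bool.toInt_false] <;> linarith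

lemma localEnergy_thrUpd_ge_of_pos_of_le (x : V → Bool) {i : V}
    (hθ₀ : 0 < clampedThreshold G b i) (hθ₁ : clampedThreshold G b i ≤ G.degree i) :
    2 * clampedThreshold G b i - 2 * G.degree i - 1 ≤ localEnergy G b x (thrUpd G b x) i := by
  have h₀ := activeCount_nonneg (G := G) x i
  have h₁ := activeCount_le_degree (G := G) x i
  rcases thrUpd_apply_cases (G := G) (b := b) x i with ⟨hy, hs⟩ | ⟨hy, hs⟩ <;> cases hx : x i <;>
    simp only [localEnergy, hx, hy, Bool.toInt_true, Bool.toInt_false] <;> linarith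

variable (G b) (x₀ : V → Bool)

def energyAt (t : ℕ) : ℤ := energy G b ((thrUpd G b)^[t] x₀) ((thrUpd G b)^[t + 1] x₀)

lemma card_twoStepChanges_le_energyAt_sub (t : ℕ) :
    (#(twoStepChanges (thrUpd G b) x₀ t) : ℤ) ≤ energyAt G b x₀ t - energyAt G b x₀ (t + 1) := by
  simpa only [twoStepChanges, energyAt, Function.iterate_succ_apply'] using
    card_ne_le_energy_sub ((thrUpd G b)^[t] x₀) ((thrUpd G b)^[t + 1] x₀)

/-- A step lowers the energy by at least the number of changed vertices, hence by at least 2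
unless a single vertex changes. -/
lemma two_mul_le_energyAt_sub_add_sum_card_soloChangeTimes {T : ℕ}
    (h : ∀ t < T, (thrUpd G b)^[t + 2] x₀ ≠ (thrUpd G b)^[t] x₀) :
    2 * (T : ℤ) ≤ energyAt G b x₀ 0 - energyAt G b x₀ T
      + ∑ i, (#(soloChangeTimes (thrUpd G b) x₀ T i) : ℤ) := by
  set C := twoStepChanges (thrUpd G b) x₀
  have hstep : ∀ t ∈ range T, 2 ≤ (#(C t) : ℤ) + ∑ i, if C t = {i} then 1 else 0 := by
    intro t ht
    have hne : (C t).Nonempty := twoStepChanges_nonempty (h t (mem_range.mp ht))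
    have hsum : 0 ≤ ∑ i, (if C t = {i} then 1 else 0 : ℤ) :=
      sum_nonneg fun i _ => by split_ifs <;> norm_num
    by_cases hone : #(C t) = 1
    · obtain ⟨a, ha⟩ := card_eq_one.mp hone
      simp [ha]
    · have := hne.card_pos
      omega
  have hsolo : ∀ i, (#(soloChangeTimes (thrUpd G b) x₀ T i) : ℤ) =
      ∑ t ∈ range T, if C t = {i} then 1 else 0 := by
    intro i
    rw [soloChangeTimes, card_filter]
    push_cast
    rfl
  calc 2 * (T : ℤ) = ∑ t ∈ range T, 2 := by simp [mul_comm]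
    _ ≤ ∑ t ∈ range T, ((#(C t) : ℤ) + ∑ i, if C t = {i} then 1 else 0) := sum_le_sum hstep
    _ ≤ ∑ t ∈ range T, (energyAt G b x₀ t - energyAt G b x₀ (t + 1))
        + ∑ i, (#(soloChangeTimes (thrUpd G b) x₀ T i) : ℤ) := by
      rw [sum_add_distrib, sum_comm, sum_congr rfl fun i _ => hsolo i]
      gcongr with t
      exact card_twoStepChanges_le_energyAt_sub G b x₀ t
    _ = _ := by rw [sum_range_sub']

lemma localEnergy_sub_add_card_soloChangeTimes_le (T : ℕ) (i : V) :
    localEnergy G b x₀ (thrUpd G b x₀) i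
      - localEnergy G b ((thrUpd G b)^[T] x₀) ((thrUpd G b)^[T + 1] x₀) i
      + #(soloChangeTimes (thrUpd G b) x₀ T i) ≤ 2 * G.degree i + 2 := by
  rw [Function.iterate_succ_apply']
  have hstart := localEnergy_thrUpd_le (G := G) (b := b) x₀ i
  have hθ₀ := clampedThreshold_nonneg (G := G) (b := b) i
  have hθ₁ := clampedThreshold_le (G := G) (b := b) i
  by_cases hext : clampedThreshold G b i = 0 ∨ clampedThreshold G b i = G.degree i + 1
  · have hend := localEnergy_thrUpd_ge (G := G) (b := b) ((thrUpd G b)^[T] x₀) i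
    have hsolo := card_soloChangeTimes_le_one (x := x₀) (thrUpd_apply_eq_of_extreme hext) T
    omega
  · have hend := localEnergy_thrUpd_ge_of_pos_of_le (G := G) (b := b) ((thrUpd G b)^[T] x₀)
      (by omega : 0 < clampedThreshold G b i) (by omega)
    have hsolo := card_soloChangeTimes_le_two (x := x₀) (thrUpd_monotone (G := G) (b := b)) T i
    omega

lemma energyAt_sub_add_sum_card_soloChangeTimes_le (T : ℕ) :
    energyAt G b x₀ 0 - energyAt G b x₀ T + ∑ i, (#(soloChangeTimes (thrUpd G b) x₀ T i) : ℤ)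
      ≤ 4 * #G.edgeFinset + 2 * Fintype.card V := by
  have hdeg : ∑ i, (G.degree i : ℤ) = 2 * #G.edgeFinset := by
    exact_mod_cast G.sum_degrees_eq_twice_card_edges
  calc energyAt G b x₀ 0 - energyAt G b x₀ T + ∑ i, (#(soloChangeTimes (thrUpd G b) x₀ T i) : ℤ)
      = ∑ i, (localEnergy G b x₀ (thrUpd G b x₀) i
          - localEnergy G b ((thrUpd G b)^[T] x₀) ((thrUpd G b)^[T + 1] x₀) i
          + #(soloChangeTimes (thrUpd G b) x₀ T i)) := by
        simp only [energyAt, energy, sum_add_distrib, sum_sub_distrib, Function.iterate_zero,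
          id_eq, zero_add, Function.iterate_one]
    _ ≤ ∑ i, (2 * (G.degree i : ℤ) + 2) :=
        sum_le_sum fun i _ => localEnergy_sub_add_card_soloChangeTimes_le G b x₀ T i
    _ = 4 * #G.edgeFinset + 2 * Fintype.card V := by
        rw [sum_add_distrib, ← mul_sum, hdeg, sum_const, card_univ]
        ring

theorem le_of_forall_lt_iterate_add_two_ne {T : ℕ}
    (h : ∀ t < T, (thrUpd G b)^[t + 2] x₀ ≠ (thrUpd G b)^[t] x₀) :
    T ≤ 2 * #G.edgeFinset + Fintype.card V := by
  have hlow := two_mul_le_energyAt_sub_add_sum_card_soloChangeTimes G b x₀ h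
  have hup := energyAt_sub_add_sum_card_soloChangeTimes_le G b x₀ T
  omega

end Threshold

end ThresholdNetwork

open ThresholdNetwork in
/-- Main convergence bound for reversible threshold spread: from every initial
adoption vector, within `2|E| + |V|` time steps the trajectory converges to a cycle
of length at most 2. -/
theorem convergence_bound_reversible_threshold {V : Type*} [Fintype V] [DecidableEq V]
    (G : SimpleGraph V) [DecidableRel G.Adj] (b : V → ℤ) (x0 : V → Bool) :
    ∃ t ≤ 2 * G.edgeFinset.card + Fintype.card V,
      (thrUpd G b)^[t + 2] x0 = (thrUpd G b)^[t] x0 ∧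
        ∀ s ≥ t, (thrUpd G b)^[s + 2] x0 = (thrUpd G b)^[s] x0 := by
  obtain ⟨t, ht, hcycle⟩ : ∃ t ≤ 2 * #G.edgeFinset + Fintype.card V,
      (thrUpd G b)^[t + 2] x0 = (thrUpd G b)^[t] x0 := by
    by_contra! h
    have := le_of_forall_lt_iterate_add_two_ne G b x0
      (T := 2 * #G.edgeFinset + Fintype.card V + 1) fun t ht => h t (by omega)
    omega
  exact ⟨t, ht, hcycle, fun s hs => iterate_add_two_eq_of_le hcycle hs⟩
end
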